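/- Let ξ̄ > 0, δ > 0, 0 ≤ t₁ < t₂, and let F : [t₁,t₂] × [0,ξ̄] → ℝ be measurable such that for almost every ξ ∈ [0,ξ̄] the map t ↦ F(t,ξ) is absolutely continuous on [t₁,t₂] with ∂_t F(t,ξ) ≥ δ/2 for almost every t. Then for every ε > 0, the two-dimensional Lebesgue measure of the set { (t,ξ) ∈ [t₁,t₂] × [0,ξ̄] : |F(t,ξ)| < ε } is at most (4ξ̄/δ)·ε. -/
import Mathlib

open MeasureTheory Set Real

lemma slice_bound (δ t₁ t₂ ε : ℝ) (hδ : 0 < δ) (ht : t₁ ≤ t₂) (hε : 0 < ε)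
    (f G : ℝ → ℝ) (hG : IntervalIntegrable G volume t₁ t₂)
    (hGb : ∀ᵐ t ∂(volume.restrict (Set.Icc t₁ t₂)), δ / 2 ≤ G t)
    (hf : ∀ t ∈ Set.Icc t₁ t₂, f t = f t₁ + ∫ s in t₁..t, G s) :
    volume {t | t ∈ Set.Icc t₁ t₂ ∧ |f t| < ε} ≤ ENNReal.ofReal (4 / δ * ε) := by
  have key : ∀ x ∈ Set.Icc t₁ t₂, ∀ y ∈ Set.Icc t₁ t₂, x ≤ y →
      δ / 2 * (y - x) ≤ f y - f x := by
    intro x hx y hy hxy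
    have hGx : IntervalIntegrable G volume x y := by
      apply hG.mono_set
      rw [Set.uIcc_of_le hxy, Set.uIcc_of_le ht]
      exact Set.Icc_subset_Icc hx.1 hy.2
    have hdiff : f y - f x = ∫ s in x..y, G s := by
      rw [hf y hy, hf x hx]
      have h1 : IntervalIntegrable G volume t₁ x := by
        apply hG.mono_set
        rw [Set.uIcc_of_le hx.1, Set.uIcc_of_le ht]
        exact Set.Icc_subset_Icc le_rfl hx.2
      have := intervalIntegral.integral_add_adjacent_intervals h1 hGx
      linarith [this]
    rw [hdiff]
    have hconst : IntervalIntegrable (fun _ => δ / 2) volume x y :=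
      intervalIntegrable_const
    have hae : ∀ᵐ t ∂(volume.restrict (Set.Icc x y)), δ / 2 ≤ G t :=
      ae_restrict_of_ae_restrict_of_subset (Set.Icc_subset_Icc hx.1 hy.2) hGb
    have h0 := intervalIntegral.integral_mono_ae_restrict hxy hconst hGx hae
    simp only [intervalIntegral.integral_const, smul_eq_mul] at h0
    linarith [h0, (by ring : δ / 2 * (y - x) = (y - x) * (δ / 2))]
  have hC : (0:ℝ) ≤ 4 / δ * ε := by positivity
  calc volume {t | t ∈ Set.Icc t₁ t₂ ∧ |f t| < ε}
      ≤ EMetric.diam {t | t ∈ Set.Icc t₁ t₂ ∧ |f t| < ε} :=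
        Real.volume_le_diam _
    _ ≤ ENNReal.ofReal (4 / δ * ε) := by
        apply EMetric.diam_le
        intro x hx y hy
        rw [edist_dist]
        apply ENNReal.ofReal_le_ofReal
        rcases le_total x y with h | h
        · have := key x hx.1 y hy.1 h
          have h2 : |f x| < ε := hx.2
          have h3 : |f y| < ε := hy.2
          rw [Real.dist_eq, abs_of_nonpos (by linarith)]
          have a2 := abs_lt.1 h2; have a3 := abs_lt.1 h3
          rw [neg_sub, div_mul_eq_mul_div, le_div_iff₀ hδ]
          nlinarith
        · have := key y hy.1 x hx.1 h
          have h2 : |f x| < ε := hx.2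
          have h3 : |f y| < ε := hy.2
          rw [Real.dist_eq, abs_of_nonneg (by linarith)]
          have a2 := abs_lt.1 h2; have a3 := abs_lt.1 h3
          rw [div_mul_eq_mul_div, le_div_iff₀ hδ]
          nlinarith

theorem stmt17 (ξbar δ t₁ t₂ : ℝ) (hξbar : 0 < ξbar) (hδ : 0 < δ)
    (ht₁ : 0 ≤ t₁) (ht : t₁ < t₂)
    (F : ℝ → ℝ → ℝ) (hFmeas : Measurable (Function.uncurry F))
    (hAC : ∀ᵐ ξ ∂(volume.restrict (Set.Icc 0 ξbar)), ∃ G : ℝ → ℝ,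
      IntervalIntegrable G volume t₁ t₂ ∧
      (∀ᵐ t ∂(volume.restrict (Set.Icc t₁ t₂)), δ / 2 ≤ G t) ∧
      (∀ t ∈ Set.Icc t₁ t₂, F t ξ = F t₁ ξ + ∫ s in t₁..t, G s)) :
    ∀ ε : ℝ, 0 < ε →
      (volume.prod volume)
          {p : ℝ × ℝ | p.1 ∈ Set.Icc t₁ t₂ ∧ p.2 ∈ Set.Icc (0:ℝ) ξbar ∧
            |F p.1 p.2| < ε} ≤
        ENNReal.ofReal ((4 * ξbar / δ) * ε) := by
  intro ε hε
  set S : Set (ℝ × ℝ) := {p : ℝ × ℝ | p.1 ∈ Set.Icc t₁ t₂ ∧ p.2 ∈ Set.Icc (0:ℝ) ξbar ∧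
            |F p.1 p.2| < ε} with hS
  have hSm : MeasurableSet S := by
    apply MeasurableSet.inter (measurable_fst measurableSet_Icc)
    apply MeasurableSet.inter (measurable_snd measurableSet_Icc)
    exact measurableSet_lt (hFmeas.abs) measurable_const
  rw [Measure.prod_apply_symm hSm]
  set g : ℝ → ENNReal := fun ξ => volume ((fun t => (t, ξ)) ⁻¹' S) with hg
  have hC : (0:ℝ) ≤ 4 / δ * ε := by positivity
  have hbound : ∀ᵐ ξ ∂(volume : Measure ℝ),
      g ξ ≤ (Set.Icc (0:ℝ) ξbar).indicator (fun _ => ENNReal.ofReal (4 / δ * ε)) ξ := by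
    have h1 : ∀ᵐ ξ ∂(volume : Measure ℝ), ξ ∈ Set.Icc (0:ℝ) ξbar → ∃ G : ℝ → ℝ,
        IntervalIntegrable G volume t₁ t₂ ∧
        (∀ᵐ t ∂(volume.restrict (Set.Icc t₁ t₂)), δ / 2 ≤ G t) ∧
        (∀ t ∈ Set.Icc t₁ t₂, F t ξ = F t₁ ξ + ∫ s in t₁..t, G s) :=
      (ae_restrict_iff' measurableSet_Icc).1 hAC
    filter_upwards [h1] with ξ hξ
    by_cases hmem : ξ ∈ Set.Icc (0:ℝ) ξbar
    · rw [Set.indicator_of_mem hmem]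
      obtain ⟨G, hGint, hGb, hFt⟩ := hξ hmem
      have : ((fun t => (t, ξ)) ⁻¹' S) = {t | t ∈ Set.Icc t₁ t₂ ∧ |F t ξ| < ε} := by
        ext t
        simp only [Set.mem_preimage, hS, Set.mem_setOf_eq, Set.mem_Icc] at *
        tauto
      rw [hg]; simp only [this]
      exact slice_bound δ t₁ t₂ ε hδ ht.le hε (fun t => F t ξ) G hGint hGb hFt
    · rw [Set.indicator_of_notMem hmem]
      have : ((fun t => (t, ξ)) ⁻¹' S) = ∅ := by
        ext t
        simp only [Set.mem_preimage, hS, Set.mem_setOf_eq, Set.mem_Icc,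
          Set.mem_empty_iff_false, iff_false] at *
        tauto
      simp [hg, this]
  calc ∫⁻ ξ, g ξ ∂volume
      ≤ ∫⁻ ξ, (Set.Icc (0:ℝ) ξbar).indicator (fun _ => ENNReal.ofReal (4 / δ * ε)) ξ ∂volume :=
        lintegral_mono_ae hbound
    _ = ENNReal.ofReal (4 / δ * ε) * volume (Set.Icc (0:ℝ) ξbar) := by
        rw [lintegral_indicator measurableSet_Icc]; simp [mul_comm]
    _ = ENNReal.ofReal ((4 * ξbar / δ) * ε) := by
        rw [Real.volume_Icc, ← ENNReal.ofReal_mul hC]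
        ring_nf
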